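/- arXiv:1603.08328 — 2 statements merged into one kernel-verified Lean document; each statement's English description precedes it below -/
import Mathlib

section
/- If a nonnegative symmetric function ψ̄ : S × S → ℝ with ψ̄(α,α) = 0 for all α satisfies the triangle inequality ψ̄(β,γ) ≤ ψ̄(β,α) + ψ̄(α,γ) for all α,β,γ, and w ≥ 0 is a constant weight, then the weighted truncated potential ψ(f,g) = w · min(ψ̄(f,g), τ) satisfies the submodularity of expansion moves: ψ(α,α) + ψ(β,γ) ≤ ψ(β,α) + ψ(α,γ) for all α,β,γ. -/
theorem weighted_truncated_submodular_expansion {S : Type*} (ψbar : S → S → ℝ)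
    (hnonneg : ∀ f g, 0 ≤ ψbar f g)
    (hsymm : ∀ f g, ψbar f g = ψbar g f)
    (hdiag : ∀ α, ψbar α α = 0)
    (htri : ∀ α β γ, ψbar β γ ≤ ψbar β α + ψbar α γ)
    (w τ : ℝ) (hw : 0 ≤ w) (hτ : 0 ≤ τ) :
    ∀ α β γ, w * min (ψbar α α) τ + w * min (ψbar β γ) τ ≤
      w * min (ψbar β α) τ + w * min (ψbar α γ) τ := by
  intro α β γ
  have h1 := hnonneg β α
  have h2 := hnonneg α γ
  have h3 := htri α β γ
  rw [hdiag]
  have key : min (ψbar β γ) τ ≤ min (ψbar β α) τ + min (ψbar α γ) τ := by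
    rcases le_total (ψbar β α) τ with ha | ha <;>
    rcases le_total (ψbar α γ) τ with hb | hb <;>
    simp [min_eq_left, min_eq_right, ha, hb] <;>
    first
    | (left; linarith)
    | (right; linarith)
  have := mul_le_mul_of_nonneg_left key hw
  rw [min_eq_left (le_refl (0:ℝ) |>.trans hτ)]
  linarith [mul_add w (min (ψbar β α) τ) (min (ψbar α γ) τ)]
end

section
/- For any pseudometric ψ̄ on a label set S, any τ ≥ 0, and any constant proposal g_p = g_q = α, the truncated potential ψ = min(ψ̄, τ) satisfies the fusion submodularity inequality ψ(α,α) + ψ(f_p,f_q) ≤ ψ(f_p,α) + ψ(α,f_q) for all f_p, f_q ∈ S. -/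
theorem truncated_pseudometric_fusion_submodular {S : Type*} (ψbar : S → S → ℝ)
    (hnonneg : ∀ f g, 0 ≤ ψbar f g)
    (hsymm : ∀ f g, ψbar f g = ψbar g f)
    (hdiag : ∀ f, ψbar f f = 0)
    (htri : ∀ α β γ, ψbar β γ ≤ ψbar β α + ψbar α γ)
    (τ : ℝ) (hτ : 0 ≤ τ) (α : S) :
    ∀ fp fq : S, min (ψbar α α) τ + min (ψbar fp fq) τ ≤
      min (ψbar fp α) τ + min (ψbar α fq) τ := by
  intro fp fq
  rw [hdiag, min_eq_left hτ, zero_add]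
  rcases le_or_gt (ψbar fp α) τ with h1 | h1
  · rcases le_or_gt (ψbar α fq) τ with h2 | h2
    · rw [min_eq_left h1, min_eq_left h2]
      exact le_trans (min_le_left _ _) (htri α fp fq)
    · rw [min_eq_right h2.le]
      exact le_trans (min_le_right _ _) (le_add_of_nonneg_left (le_min (hnonneg _ _) hτ))
  · rw [min_eq_right h1.le]
    exact le_trans (min_le_right _ _) (le_add_of_nonneg_right (le_min (hnonneg _ _) hτ))
end
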